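/- Let 𝒞 be an antiunitary operator on ℂⁿ with 𝒞² = ±1, and let f : 𝕋 → GLₙ(ℂ) satisfy f(z) = 𝒞 f(z̄)* 𝒞* for all z ∈ 𝕋 and admit a canonical factorization. Then the canonical extension fᵉ : 𝔻² → GLₙ(ℂ) satisfies fᵉ(z) = 𝒞 fᵉ(z̄)* 𝒞* for all z ∈ 𝔻². -/

import Mathlib

/-!
If `f = f₋ f₊` is a canonical factorization, the symmetry `f(z) = 𝒞 f(z̄)* 𝒞*` on the circle
produces a second one, `f = (𝒞 f₊(z̄)* 𝒞*) (𝒞 f₋(z̄)* 𝒞*)`, with the roles of the factors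
swapped. Two canonical factorizations `f₋ f₊ = f₋' f₊'` differ by a constant matrix:
`f₋'⁻¹ f₋ = f₊' f₊⁻¹` on the circle, and after the reflection `z ↦ z̄ = z⁻¹` both sides are
holomorphic on the disk, which forces them to be constant (Cauchy's integral formula). So the
canonical extension `fᵉ(z) = f₋ᵉ(z̄⁻¹) f₊ᵉ(z)` does not depend on the factorization, and computing
it with the second factorization gives `fᵉ(z) = 𝒞 fᵉ(z̄)* 𝒞*`.
-/

open Metric

/-- A canonical (right) factorization `f = f₋ f₊` of a nonsingular matrix function on the
unit circle.  The factor `f₊` extends continuously and invertibly to the closed unit disk,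
analytically on the open disk; the factor `f₋` extends continuously and invertibly to the
closed exterior disk including `∞`.  We encode the exterior extension `f₋ᵉ` via the map
`Fm : 𝔻² → GLₙ(ℂ)`, `Fm w = f₋ᵉ(w⁻¹)` (so `Fm 0 = f₋ᵉ(∞)`), which is continuous on the
closed unit disk, analytic on the open disk, and invertible-valued. -/
structure CanonicalFactorization (n : ℕ) (f : ℂ → Matrix (Fin n) (Fin n) ℂ) : Type where
  Fm : ℂ → Matrix (Fin n) (Fin n) ℂ
  Fp : ℂ → Matrix (Fin n) (Fin n) ℂ
  contOn_m : ContinuousOn Fm (closedBall 0 1)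
  contOn_p : ContinuousOn Fp (closedBall 0 1)
  anal_m : ∀ i j, DifferentiableOn ℂ (fun z => Fm z i j) (ball 0 1)
  anal_p : ∀ i j, DifferentiableOn ℂ (fun z => Fp z i j) (ball 0 1)
  unit_m : ∀ z ∈ closedBall (0 : ℂ) 1, IsUnit (Fm z)
  unit_p : ∀ z ∈ closedBall (0 : ℂ) 1, IsUnit (Fp z)
  factor : ∀ z ∈ sphere (0 : ℂ) 1, f z = Fm z⁻¹ * Fp z

open Complex ComplexConjugate Matrix

section Reflection

variable {E : Type*} [NormedAddCommGroup E] [NormedSpace ℂ E]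

theorem circleIntegral_comp_conj (F : ℂ → E) (R : ℝ) :
    (∮ z in C(0, R), F (conj z)) = ∮ z in C(0, R), (R ^ 2 / z ^ 2 : ℂ) • F z := by
  set ψ : ℝ → E := fun θ => (circleMap 0 R (-θ) * I) • F (circleMap 0 R θ)
  have hψ : Function.Periodic ψ (2 * Real.pi) := fun θ => by
    simp only [ψ, neg_add, ← sub_eq_add_neg, (periodic_circleMap 0 R).sub_eq,
      periodic_circleMap 0 R θ]
  calc (∮ z in C(0, R), F (conj z)) = ∫ θ in 0..2 * Real.pi, ψ (-θ) := by
        simp [circleIntegral, ψ, conj_circleMap_zero]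
    _ = ∫ θ in 0..2 * Real.pi, ψ θ := by
        simpa using hψ.intervalIntegral_add_eq (-(2 * Real.pi)) 0
    _ = _ := by
        refine intervalIntegral.integral_congr fun θ _ => ?_
        simp only [ψ, deriv_circleMap, smul_smul]
        congr 1
        rcases eq_or_ne R 0 with rfl | hR
        · simp
        have h0 : circleMap 0 R θ ≠ 0 := by simp [circleMap, hR, Complex.exp_ne_zero]
        have hR2 : circleMap 0 R (-θ) * circleMap 0 R θ = R ^ 2 := by
          rw [← conj_circleMap_zero, conj_mul', norm_circleMap_zero]
          norm_cast
          exact sq_abs R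
        field_simp
        exact hR2

variable [CompleteSpace E] {h k : ℂ → E}

theorem DiffContOnCl.eq_apply_zero_of_eq_comp_conj (hk : DiffContOnCl ℂ k (ball 0 1))
    (hh : DiffContOnCl ℂ h (ball 0 1)) (hkh : ∀ z ∈ sphere (0 : ℂ) 1, k z = h (conj z))
    {w : ℂ} (hw : w ∈ ball (0 : ℂ) 1) : k w = k 0 := by
  have hwz : ∀ z ∈ closedBall (0 : ℂ) 1, 1 - w * z ≠ 0 := fun z hz => by
    have : ‖w * z‖ < 1 := by
      rw [norm_mul]
      exact mul_lt_one_of_nonneg_of_lt_one_left (norm_nonneg _) (mem_ball_zero_iff.1 hw)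
        (mem_closedBall_zero_iff.1 hz)
    exact sub_ne_zero.2 fun h1 => by simp [← h1] at this
  have hint : ∀ a ∈ ball (0 : ℂ) 1, CircleIntegrable (fun z => (z - a)⁻¹ • k z) 0 1 :=
    fun a ha => ContinuousOn.circleIntegrable zero_le_one <|
      ((continuousOn_id.sub continuousOn_const).inv₀ fun z hz =>
        sub_ne_zero.2 (sphere_disjoint_ball.ne_of_mem hz ha)).smul
      (hk.continuousOn_ball.mono sphere_subset_closedBall)
  -- On the circle `conj z = z⁻¹`, so `G (conj z) = ((z - w)⁻¹ - z⁻¹) • k z`,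
  -- while `(z ^ 2)⁻¹ • G z = (w / (1 - w * z)) • h z` is holomorphic on the disk.
  set G : ℂ → E := fun u => (u ^ 2 * w / (1 - w * u)) • h u
  have hG : (∮ z in C(0, 1), G (conj z)) = 0 := by
    rw [circleIntegral_comp_conj]
    calc (∮ z in C(0, 1), ((1 : ℝ) ^ 2 / z ^ 2 : ℂ) • G z)
        = ∮ z in C(0, 1), (w / (1 - w * z)) • h z := by
          refine circleIntegral.integral_congr zero_le_one fun z hz => ?_
          have hz0 : z ≠ 0 := ne_of_mem_sphere hz one_ne_zero
          have := hwz z (sphere_subset_closedBall hz)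
          simp only [G, smul_smul, ofReal_one, one_pow]
          congr 1
          field_simp
      _ = 0 := DiffContOnCl.circleIntegral_eq_zero zero_le_one <| by
          refine DiffContOnCl.smul (DifferentiableOn.diffContOnCl ?_) hh
          rw [closure_ball _ one_ne_zero]
          exact (differentiableOn_const w).div (by fun_prop) hwz
  have hGk : (∮ z in C(0, 1), G (conj z)) =
      ∮ z in C(0, 1), ((z - w)⁻¹ • k z - (z - 0)⁻¹ • k z) := by
    refine circleIntegral.integral_congr zero_le_one fun z hz => ?_
    have hz0 : z ≠ 0 := ne_of_mem_sphere hz one_ne_zero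
    have hzw : z - w ≠ 0 := sub_ne_zero.2 (sphere_disjoint_ball.ne_of_mem hz hw)
    simp only [G, hkh z hz, ← sub_smul, ← RCLike.inv_eq_conj (mem_sphere_zero_iff_norm.1 hz),
      sub_zero]
    congr 1
    field_simp
    ring
  rw [circleIntegral.integral_sub (hint w hw) (hint 0 (mem_ball_self one_pos)),
    hk.circleIntegral_sub_inv_smul hw, hk.circleIntegral_sub_inv_smul (mem_ball_self one_pos),
    ← smul_sub, hG, eq_comm, smul_eq_zero] at hGk
  exact sub_eq_zero.1 (hGk.resolve_left (by simp [Real.pi_ne_zero, I_ne_zero]))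

theorem DiffContOnCl.exists_const_of_eq_comp_conj (hh : DiffContOnCl ℂ h (ball 0 1))
    (hk : DiffContOnCl ℂ k (ball 0 1)) (hhk : ∀ z ∈ sphere (0 : ℂ) 1, h z = k (conj z)) :
    ∃ a, ∀ z ∈ closedBall (0 : ℂ) 1, h z = a ∧ k z = a := by
  have hkh : ∀ z ∈ sphere (0 : ℂ) 1, k z = h (conj z) := fun z hz => by
    simpa using (hhk (conj z) (by simpa using hz)).symm
  have extend : ∀ {g : ℂ → E}, DiffContOnCl ℂ g (ball 0 1) → (∀ w ∈ ball (0 : ℂ) 1, g w = g 0) →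
      ∀ z ∈ closedBall (0 : ℂ) 1, g z = g 0 := fun hg hc =>
    Set.EqOn.of_subset_closure hc hg.continuousOn_ball continuousOn_const ball_subset_closedBall
      (closure_ball (0 : ℂ) one_ne_zero).ge
  have hh0 := extend hh fun w hw => hh.eq_apply_zero_of_eq_comp_conj hk hhk hw
  have hk0 := extend hk fun w hw => hk.eq_apply_zero_of_eq_comp_conj hh hkh hw
  have h1 : (1 : ℂ) ∈ closedBall (0 : ℂ) 1 := by simp
  refine ⟨h 0, fun z hz => ⟨hh0 z hz, ?_⟩⟩
  rw [hk0 z hz, ← hk0 1 h1, ← hh0 1 h1, hhk 1 (by simp), map_one]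

end Reflection

section BanachAlgebra

variable {𝕜 E A : Type*} [NontriviallyNormedField 𝕜] [NormedAddCommGroup E] [NormedSpace 𝕜 E]
  [NormedRing A] [NormedAlgebra 𝕜 A] {f g : E → A} {s : Set E}

theorem DiffContOnCl.mul (hf : DiffContOnCl 𝕜 f s) (hg : DiffContOnCl 𝕜 g s) :
    DiffContOnCl 𝕜 (fun x => f x * g x) s :=
  ⟨hf.1.mul hg.1, hf.2.mul hg.2⟩

theorem DiffContOnCl.ringInverse [HasSummableGeomSeries A] (hf : DiffContOnCl 𝕜 f s)
    (hu : ∀ x ∈ closure s, IsUnit (f x)) : DiffContOnCl 𝕜 (fun x => Ring.inverse (f x)) s :=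
  ⟨hf.1.inverse fun x hx => hu x (subset_closure hx), fun x hx => by
    have := NormedRing.inverse_continuousAt (hu x hx).unit
    rw [IsUnit.unit_spec] at this
    exact this.comp_continuousWithinAt (hf.2 x hx)⟩

end BanachAlgebra

section Factorization

variable {A : Type*} [NormedRing A] [NormedAlgebra ℂ A] [CompleteSpace A]

theorem comp_conj_mul_eq_of_eqOn_sphere {M₁ P₁ P₂ M₂ : ℂ → A}
    (hM₁ : DiffContOnCl ℂ M₁ (ball 0 1)) (hP₁ : DiffContOnCl ℂ P₁ (ball 0 1))
    (hP₂ : DiffContOnCl ℂ P₂ (ball 0 1)) (hM₂ : DiffContOnCl ℂ M₂ (ball 0 1))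
    (hP₁u : ∀ z ∈ closedBall (0 : ℂ) 1, IsUnit (P₁ z))
    (hP₂u : ∀ z ∈ closedBall (0 : ℂ) 1, IsUnit (P₂ z))
    (h : ∀ w ∈ sphere (0 : ℂ) 1, M₁ (conj w) * P₁ w = P₂ (conj w) * M₂ w) :
    ∀ z ∈ closedBall (0 : ℂ) 1, M₁ (conj z) * P₁ z = P₂ (conj z) * M₂ z := by
  have hcl : closure (ball (0 : ℂ) 1) = closedBall 0 1 := closure_ball 0 one_ne_zero
  obtain ⟨a, ha⟩ := DiffContOnCl.exists_const_of_eq_comp_conj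
    (hM₂.mul (hP₁.ringInverse (hcl ▸ hP₁u))) ((hP₂.ringInverse (hcl ▸ hP₂u)).mul hM₁)
    fun w hw => by
      have hw' : conj w ∈ closedBall (0 : ℂ) 1 := by simpa using sphere_subset_closedBall hw
      rw [eq_comm, Ring.inverse_mul_eq_iff_eq_mul _ _ _ (hP₂u _ hw'), ← mul_assoc,
        Ring.eq_mul_inverse_iff_mul_eq _ _ _ (hP₁u w (sphere_subset_closedBall hw))]
      exact h w hw
  intro z hz
  have hz' : conj z ∈ closedBall (0 : ℂ) 1 := by simpa using hz
  have hM₂ : M₂ z = a * P₁ z := by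
    rw [← (ha z hz).1, mul_assoc, Ring.inverse_mul_cancel _ (hP₁u z hz), mul_one]
  have hM₁ : M₁ (conj z) = P₂ (conj z) * a := by
    rw [← (ha _ hz').2, ← mul_assoc, Ring.mul_inverse_cancel _ (hP₂u _ hz'), one_mul]
  rw [hM₁, hM₂, mul_assoc]

end Factorization

section AntiunitaryConj

variable {ι : Type*} [Fintype ι]

/-- `𝒞 X* 𝒞*` for the antiunitary operator `𝒞 v = C v̄`. -/
def antiunitaryConj (C X : Matrix ι ι ℂ) : Matrix ι ι ℂ :=
  C * (Xᴴ).map conj * Cᴴ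

theorem antiunitaryConj_eq (C X : Matrix ι ι ℂ) : antiunitaryConj C X = C * Xᵀ * Cᴴ :=
  congrArg (C * · * Cᴴ) (by ext i j; simp)

theorem antiunitaryConj_mul [DecidableEq ι] {C : Matrix ι ι ℂ} (hC : Cᴴ * C = 1)
    (X Y : Matrix ι ι ℂ) :
    antiunitaryConj C (X * Y) = antiunitaryConj C Y * antiunitaryConj C X := by
  simp only [antiunitaryConj_eq, transpose_mul, Matrix.mul_assoc, ← Matrix.mul_assoc Cᴴ, hC,
    Matrix.one_mul]

theorem IsUnit.antiunitaryConj [DecidableEq ι] {C X : Matrix ι ι ℂ} (hC : Cᴴ * C = 1)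
    (hX : IsUnit X) : IsUnit (antiunitaryConj C X) := by
  rw [antiunitaryConj_eq]
  exact ((IsUnit.of_mul_eq_one_right Cᴴ hC).mul ((isUnit_transpose X).2 hX)).mul
    (IsUnit.of_mul_eq_one C hC)

theorem continuous_antiunitaryConj (C : Matrix ι ι ℂ) : Continuous (antiunitaryConj C) := by
  rw [funext (antiunitaryConj_eq C)]
  exact (continuous_const.matrix_mul continuous_id.matrix_transpose).matrix_mul continuous_const

open scoped Matrix.Norms.Operator in
theorem differentiable_antiunitaryConj [DecidableEq ι] (C : Matrix ι ι ℂ) :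
    Differentiable ℂ (antiunitaryConj C) := by
  have : Differentiable ℂ (transpose : Matrix ι ι ℂ → Matrix ι ι ℂ) :=
    (LinearMap.toContinuousLinearMap (transposeLinearEquiv ι ι ℂ ℂ).toLinearMap).differentiable
  simp only [funext (antiunitaryConj_eq C)]
  fun_prop

end AntiunitaryConj

namespace CanonicalFactorization

variable {n : ℕ} {f : ℂ → Matrix (Fin n) (Fin n) ℂ}

/-- The canonical extension `fᵉ(z) = f₋ᵉ(z̄⁻¹) f₊ᵉ(z)`. -/
def extension (c : CanonicalFactorization n f) (z : ℂ) : Matrix (Fin n) (Fin n) ℂ :=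
  c.Fm (conj z) * c.Fp z

theorem extension_eq_of_mem_sphere (c : CanonicalFactorization n f) {z : ℂ}
    (hz : z ∈ sphere (0 : ℂ) 1) : c.extension z = f z := by
  rw [extension, c.factor z hz, RCLike.inv_eq_conj (mem_sphere_zero_iff_norm.1 hz)]

section Regularity

open scoped Matrix.Norms.Operator

theorem diffContOnCl_Fm (c : CanonicalFactorization n f) : DiffContOnCl ℂ c.Fm (ball 0 1) :=
  ⟨differentiableOn_pi.2 fun i => differentiableOn_pi.2 (c.anal_m i),
    (closure_ball (0 : ℂ) one_ne_zero).symm ▸ c.contOn_m⟩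

theorem diffContOnCl_Fp (c : CanonicalFactorization n f) : DiffContOnCl ℂ c.Fp (ball 0 1) :=
  ⟨differentiableOn_pi.2 fun i => differentiableOn_pi.2 (c.anal_p i),
    (closure_ball (0 : ℂ) one_ne_zero).symm ▸ c.contOn_p⟩

theorem extension_unique (c c' : CanonicalFactorization n f) {z : ℂ}
    (hz : z ∈ closedBall (0 : ℂ) 1) : c.extension z = c'.extension z :=
  comp_conj_mul_eq_of_eqOn_sphere c.diffContOnCl_Fm c.diffContOnCl_Fp c'.diffContOnCl_Fm
    c'.diffContOnCl_Fp c.unit_p c'.unit_m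
    (fun w hw => by
      rw [← extension, ← extension, c.extension_eq_of_mem_sphere hw,
        c'.extension_eq_of_mem_sphere hw]) z hz

theorem differentiableOn_antiunitaryConj_entry {F : ℂ → Matrix (Fin n) (Fin n) ℂ}
    (hF : ∀ i j, DifferentiableOn ℂ (fun z => F z i j) (ball 0 1))
    (C : Matrix (Fin n) (Fin n) ℂ) (i j : Fin n) :
    DifferentiableOn ℂ (fun z => antiunitaryConj C (F z) i j) (ball 0 1) :=
  differentiableOn_pi.1 (differentiableOn_pi.1 ((differentiable_antiunitaryConj C)
    |>.comp_differentiableOn (differentiableOn_pi.2 fun i => differentiableOn_pi.2 (hF i))) i) j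

end Regularity

def antiunitaryConjugate (c : CanonicalFactorization n f) {C : Matrix (Fin n) (Fin n) ℂ}
    (hC : Cᴴ * C = 1) (hf : ∀ z ∈ sphere (0 : ℂ) 1, f z = antiunitaryConj C (f (conj z))) :
    CanonicalFactorization n f where
  Fm z := antiunitaryConj C (c.Fp z)
  Fp z := antiunitaryConj C (c.Fm z)
  contOn_m := (continuous_antiunitaryConj C).comp_continuousOn c.contOn_p
  contOn_p := (continuous_antiunitaryConj C).comp_continuousOn c.contOn_m
  anal_m := differentiableOn_antiunitaryConj_entry c.anal_p C
  anal_p := differentiableOn_antiunitaryConj_entry c.anal_m C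
  unit_m z hz := (c.unit_p z hz).antiunitaryConj hC
  unit_p z hz := (c.unit_m z hz).antiunitaryConj hC
  factor z hz := by
    have hz' : conj z ∈ sphere (0 : ℂ) 1 := by simpa using hz
    rw [hf z hz, ← c.extension_eq_of_mem_sphere hz', extension, conj_conj,
      antiunitaryConj_mul hC, RCLike.inv_eq_conj (mem_sphere_zero_iff_norm.1 hz)]

theorem extension_antiunitaryConjugate (c : CanonicalFactorization n f)
    {C : Matrix (Fin n) (Fin n) ℂ} (hC : Cᴴ * C = 1)
    (hf : ∀ z ∈ sphere (0 : ℂ) 1, f z = antiunitaryConj C (f (conj z))) (z : ℂ) :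
    (c.antiunitaryConjugate hC hf).extension z = antiunitaryConj C (c.Fm z * c.Fp (conj z)) := by
  rw [antiunitaryConj_mul hC]
  rfl

end CanonicalFactorization

open Matrix in
theorem extension_transpose_equivariant_general {n : ℕ} (f : ℂ → Matrix (Fin n) (Fin n) ℂ)
    (c : CanonicalFactorization n f)
    (C : Matrix (Fin n) (Fin n) ℂ) (hC : Cᴴ * C = 1 ∧ C * Cᴴ = 1)
    (hf : ∀ z ∈ sphere (0 : ℂ) 1,
      f z = C * ((f (starRingEnd ℂ z))ᴴ).map (starRingEnd ℂ) * Cᴴ) :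
    ∀ z ∈ closedBall (0 : ℂ) 1,
      c.Fm (starRingEnd ℂ z) * c.Fp z =
        C * (((c.Fm z * c.Fp (starRingEnd ℂ z))ᴴ).map (starRingEnd ℂ)) * Cᴴ := fun z hz =>
  (c.extension_unique (c.antiunitaryConjugate hC.1 hf) hz).trans
    (c.extension_antiunitaryConjugate hC.1 hf z)

open Matrix in
/-- Let `𝒞` be an antiunitary operator on `ℂⁿ` with `𝒞² = ±1`, written `𝒞 v = C (conj v)`
with `C` unitary, so `𝒞 x* 𝒞* = C ((x*)̄) C* = C xᵀ C*`; we keep the form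
`C ((xᴴ).map conj) Cᴴ`.  If `f : 𝕋 → GLₙ(ℂ)` satisfies `f(z) = 𝒞 f(z̄)* 𝒞*` and admits a
canonical factorization, then its canonical extension `fᵉ(z) = f₋ᵉ(z̄⁻¹) f₊ᵉ(z)` satisfies
`fᵉ(z) = 𝒞 fᵉ(z̄)* 𝒞*` for all `z` in the closed unit disk. -/
theorem extension_transpose_equivariant {n : ℕ} (f : ℂ → Matrix (Fin n) (Fin n) ℂ)
    (c : CanonicalFactorization n f)
    (C : Matrix (Fin n) (Fin n) ℂ) (hC : Cᴴ * C = 1 ∧ C * Cᴴ = 1)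
    (ε : ℂ) (hε : ε = 1 ∨ ε = -1)
    (hC2 : C * C.map (starRingEnd ℂ) = ε • (1 : Matrix (Fin n) (Fin n) ℂ))
    (hf : ∀ z ∈ sphere (0 : ℂ) 1,
      f z = C * ((f (starRingEnd ℂ z))ᴴ).map (starRingEnd ℂ) * Cᴴ) :
    ∀ z ∈ closedBall (0 : ℂ) 1,
      c.Fm (starRingEnd ℂ z) * c.Fp z =
        C * (((c.Fm z * c.Fp (starRingEnd ℂ z))ᴴ).map (starRingEnd ℂ)) * Cᴴ :=
  extension_transpose_equivariant_general f c C hC hf
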